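/- Let Ω ⊆ ℝ³ be open and I ⊆ ℝ an open interval. Let v : Ω×I → ℝ³, q : Ω×I → ℝ and b : Ω×I → ℝ^{3×3} be twice continuously differentiable, and let ψ : Ω×I → ℝ³ and a : Ω×I → ℝ^{3×3} be continuously differentiable (all jointly in space and time). Assume: (i) the Piola identity Σ_j ∂_j b_{ji} = 0 on Ω×I for each i; (ii) the variable divergence condition Σ_{i,j} b_{ji} ∂_j v_i = 0 on Ω×I; (iii) the momentum equation ∂_t v_i + Σ_{k,m}(v_m − ψ_m) a_{km} ∂_k v_i + Σ_k a_{ki} ∂_k q = 0 on Ω×I for i = 1,2,3. Then on Ω×I: −Σ_j ∂_j( Σ_{i,k} b_{ji} a_{ki} ∂_k q ) = −Σ_{i,j} ∂_j( (∂_t b_{ji}) v_i ) + Σ_{i,j,k,m} b_{ji} ∂_j( (v_m − ψ_m) a_{km} ) ∂_k v_i − Σ_{i,j,k,m} (v_m − ψ_m) a_{km} (∂_k b_{ji}) (∂_j v_i). -/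

import Mathlib

open scoped BigOperators

noncomputable section

/-- The spatial partial derivative `∂_j f` of a scalar function on space-time `ℝ³ × ℝ`. -/
def pd (j : Fin 3) (f : (Fin 3 → ℝ) × ℝ → ℝ) (p : (Fin 3 → ℝ) × ℝ) : ℝ :=
  fderiv ℝ f p (Pi.single j 1, 0)

/-- The time partial derivative `∂_t f` of a scalar function on space-time `ℝ³ × ℝ`. -/
def pt (f : (Fin 3 → ℝ) × ℝ → ℝ) (p : (Fin 3 → ℝ) × ℝ) : ℝ :=
  fderiv ℝ f p (0, 1)

abbrev SpT := (Fin 3 → ℝ) × ℝ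

section Aux

variable {f g : SpT → ℝ} {p : SpT} {w w₁ w₂ : SpT}

lemma fda_mul (hf : DifferentiableAt ℝ f p) (hg : DifferentiableAt ℝ g p) (w : SpT) :
    fderiv ℝ (fun y => f y * g y) p w = fderiv ℝ f p w * g p + f p * fderiv ℝ g p w := by
  rw [fderiv_fun_mul hf hg]
  simp only [ContinuousLinearMap.add_apply, ContinuousLinearMap.smul_apply, smul_eq_mul]
  ring

lemma fda_add (hf : DifferentiableAt ℝ f p) (hg : DifferentiableAt ℝ g p) (w : SpT) :
    fderiv ℝ (fun y => f y + g y) p w = fderiv ℝ f p w + fderiv ℝ g p w := by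
  rw [fderiv_fun_add hf hg]; simp

lemma fda_neg (f : SpT → ℝ) (p w : SpT) :
    fderiv ℝ (fun y => -(f y)) p w = -(fderiv ℝ f p w) := by
  rw [fderiv_fun_neg]; simp

lemma fda_sum {ι : Type*} (s : Finset ι) {A : ι → SpT → ℝ} {p : SpT}
    (h : ∀ i ∈ s, DifferentiableAt ℝ (A i) p) (w : SpT) :
    fderiv ℝ (fun y => ∑ i ∈ s, A i y) p w = ∑ i ∈ s, fderiv ℝ (A i) p w := by
  rw [fderiv_fun_sum h]; simp

lemma fda_diff (hf : ContDiffAt ℝ 2 f p) (w : SpT) :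
    DifferentiableAt ℝ (fun y => fderiv ℝ f y w) p := by
  have h1 : ContDiffAt ℝ 1 (fderiv ℝ f) p := hf.fderiv_right (by norm_num)
  exact (h1.differentiableAt one_ne_zero).clm_apply (differentiableAt_const w)

lemma fda_swap (hf : ContDiffAt ℝ 2 f p) (w₁ w₂ : SpT) :
    fderiv ℝ (fun y => fderiv ℝ f y w₂) p w₁ = fderiv ℝ (fun y => fderiv ℝ f y w₁) p w₂ := by
  have hd : DifferentiableAt ℝ (fderiv ℝ f) p :=
    (hf.fderiv_right (le_refl _)).differentiableAt one_ne_zero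
  have key : ∀ w : SpT, fderiv ℝ (fun y => fderiv ℝ f y w) p
      = (ContinuousLinearMap.apply ℝ ℝ w).comp (fderiv ℝ (fderiv ℝ f) p) := by
    intro w
    exact (((ContinuousLinearMap.apply ℝ ℝ w).hasFDerivAt).comp p hd.hasFDerivAt).fderiv
  have hsymm := hf.isSymmSndFDerivAt (by simp [minSmoothness_of_isRCLikeNormedField])
  rw [key w₂, key w₁]
  simp only [ContinuousLinearMap.coe_comp', Function.comp_apply,
    ContinuousLinearMap.apply_apply]
  exact hsymm w₁ w₂

-- pd / pt versions

lemma pd_mul (hf : DifferentiableAt ℝ f p) (hg : DifferentiableAt ℝ g p) (j : Fin 3) :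
    pd j (fun y => f y * g y) p = pd j f p * g p + f p * pd j g p :=
  fda_mul hf hg _

lemma pt_mul (hf : DifferentiableAt ℝ f p) (hg : DifferentiableAt ℝ g p) :
    pt (fun y => f y * g y) p = pt f p * g p + f p * pt g p :=
  fda_mul hf hg _

lemma pd_add (hf : DifferentiableAt ℝ f p) (hg : DifferentiableAt ℝ g p) (j : Fin 3) :
    pd j (fun y => f y + g y) p = pd j f p + pd j g p :=
  fda_add hf hg _

lemma pd_neg (f : SpT → ℝ) (p : SpT) (j : Fin 3) :
    pd j (fun y => -(f y)) p = -(pd j f p) :=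
  fda_neg f p _

lemma pd_sum {ι : Type*} (s : Finset ι) {A : ι → SpT → ℝ} {p : SpT}
    (h : ∀ i ∈ s, DifferentiableAt ℝ (A i) p) (j : Fin 3) :
    pd j (fun y => ∑ i ∈ s, A i y) p = ∑ i ∈ s, pd j (A i) p :=
  fda_sum s h _

lemma pt_sum {ι : Type*} (s : Finset ι) {A : ι → SpT → ℝ} {p : SpT}
    (h : ∀ i ∈ s, DifferentiableAt ℝ (A i) p) :
    pt (fun y => ∑ i ∈ s, A i y) p = ∑ i ∈ s, pt (A i) p :=
  fda_sum s h _

lemma pd_congr (h : f =ᶠ[nhds p] g) (j : Fin 3) : pd j f p = pd j g p := by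
  unfold pd; rw [h.fderiv_eq]

lemma pt_congr (h : f =ᶠ[nhds p] g) : pt f p = pt g p := by
  unfold pt; rw [h.fderiv_eq]

lemma pd_diff (hf : ContDiffAt ℝ 2 f p) (j : Fin 3) :
    DifferentiableAt ℝ (fun y => pd j f y) p :=
  fda_diff hf _

lemma pt_diff (hf : ContDiffAt ℝ 2 f p) :
    DifferentiableAt ℝ (fun y => pt f y) p :=
  fda_diff hf _

lemma pd_pt_swap (hf : ContDiffAt ℝ 2 f p) (j : Fin 3) :
    pd j (fun y => pt f y) p = pt (fun y => pd j f y) p := by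
  simp only [pd, pt]; exact fda_swap hf _ _

lemma pd_pd_swap (hf : ContDiffAt ℝ 2 f p) (j k : Fin 3) :
    pd j (fun y => pd k f y) p = pd k (fun y => pd j f y) p := by
  simp only [pd, pt]; exact fda_swap hf _ _

lemma pt_zero_fun (p : SpT) : pt (fun _ => (0 : ℝ)) p = 0 := by
  simp [pt]

lemma pd_zero_fun (p : SpT) (j : Fin 3) : pd j (fun _ => (0 : ℝ)) p = 0 := by
  simp [pd]

-- sum algebra lemmas over Fin 3

lemma aux_expand (P Q : Fin 3 → Fin 3 → ℝ) (B : Fin 3 → Fin 3 → ℝ)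
    (R S : Fin 3 → Fin 3 → Fin 3 → Fin 3 → ℝ) :
    (∑ j : Fin 3, -(∑ i : Fin 3, (P j i + B j i * (Q j i + ∑ k : Fin 3, ∑ m : Fin 3, (R j i k m + S j i k m)))))
    = -((∑ j : Fin 3, ∑ i : Fin 3, P j i) + (∑ j : Fin 3, ∑ i : Fin 3, B j i * Q j i)
        + (∑ j : Fin 3, ∑ i : Fin 3, ∑ k : Fin 3, ∑ m : Fin 3, B j i * R j i k m)
        + (∑ j : Fin 3, ∑ i : Fin 3, ∑ k : Fin 3, ∑ m : Fin 3, B j i * S j i k m)) := by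
  simp only [Fin.sum_univ_three]; ring

lemma aux_A0 (c : Fin 3 → Fin 3 → ℝ) (W : Fin 3 → ℝ) (h : ∀ i, (∑ j : Fin 3, c j i) = 0) :
    (∑ j : Fin 3, ∑ i : Fin 3, c j i * W i) = 0 := by
  have h0 := h 0; have h1 := h 1; have h2 := h 2
  simp only [Fin.sum_univ_three] at h0 h1 h2 ⊢
  linear_combination W 0 * h0 + W 1 * h1 + W 2 * h2

lemma aux_A (c x : Fin 3 → Fin 3 → ℝ) (W : Fin 3 → ℝ) (h : ∀ i, (∑ j : Fin 3, c j i) = 0) :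
    (∑ i : Fin 3, ∑ j : Fin 3, (c j i * W i + x i j)) = ∑ i : Fin 3, ∑ j : Fin 3, x i j := by
  have h0 := h 0; have h1 := h 1; have h2 := h 2
  simp only [Fin.sum_univ_three] at h0 h1 h2 ⊢
  linear_combination W 0 * h0 + W 1 * h1 + W 2 * h2

lemma aux_B (x z : Fin 3 → Fin 3 → ℝ) (h : (∑ i : Fin 3, ∑ j : Fin 3, (x i j + z i j)) = 0) :
    (∑ j : Fin 3, ∑ i : Fin 3, z i j) = -(∑ i : Fin 3, ∑ j : Fin 3, x i j) := by
  simp only [Fin.sum_univ_three] at h ⊢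
  linarith

lemma aux_C (B : Fin 3 → Fin 3 → ℝ) (r : Fin 3 → Fin 3 → Fin 3 → Fin 3 → ℝ)
    (d : Fin 3 → Fin 3 → ℝ) :
    (∑ j : Fin 3, ∑ i : Fin 3, ∑ k : Fin 3, ∑ m : Fin 3, B j i * (r j i k m * d k i))
    = ∑ i : Fin 3, ∑ j : Fin 3, ∑ k : Fin 3, ∑ m : Fin 3, B j i * r j i k m * d k i := by
  simp only [Fin.sum_univ_three]; ring

lemma aux_D (B C : Fin 3 → Fin 3 → ℝ) (u w : Fin 3 → Fin 3 → Fin 3 → ℝ)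
    (h : ∀ k, (∑ i : Fin 3, ∑ j : Fin 3, (u k i j + B j i * w k i j)) = 0) :
    (∑ j : Fin 3, ∑ i : Fin 3, ∑ k : Fin 3, ∑ m : Fin 3, B j i * (C k m * w k i j))
    = -(∑ i : Fin 3, ∑ j : Fin 3, ∑ k : Fin 3, ∑ m : Fin 3, C k m * u k i j) := by
  have h0 := h 0; have h1 := h 1; have h2 := h 2
  simp only [Fin.sum_univ_three] at h0 h1 h2 ⊢
  linear_combination (C 0 0 + C 0 1 + C 0 2) * h0 + (C 1 0 + C 1 1 + C 1 2) * h1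
    + (C 2 0 + C 2 1 + C 2 2) * h2

end Aux

/-- The reformulated interior pressure equation: under the Piola
identity, the variable divergence condition, and the momentum equation,
`−Σ_j ∂_j( Σ_{i,k} b_{ji} a_{ki} ∂_k q )
 = −Σ_{i,j} ∂_j( (∂_t b_{ji}) v_i )
 + Σ_{i,j,k,m} b_{ji} ∂_j( (v_m − ψ_m) a_{km} ) ∂_k v_i
 − Σ_{i,j,k,m} (v_m − ψ_m) a_{km} (∂_k b_{ji}) (∂_j v_i)` on `Ω×I`. -/
theorem stmt5 (Ω : Set (Fin 3 → ℝ)) (hΩ : IsOpen Ω)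
    (I : Set ℝ) (hI : ∃ t₀ t₁ : ℝ, I = Set.Ioo t₀ t₁)
    (v : (Fin 3 → ℝ) × ℝ → Fin 3 → ℝ)
    (q : (Fin 3 → ℝ) × ℝ → ℝ)
    (b : (Fin 3 → ℝ) × ℝ → Fin 3 → Fin 3 → ℝ)
    (ψ : (Fin 3 → ℝ) × ℝ → Fin 3 → ℝ)
    (a : (Fin 3 → ℝ) × ℝ → Fin 3 → Fin 3 → ℝ)
    (hv : ∀ i : Fin 3, ContDiffOn ℝ 2 (fun p => v p i) (Ω ×ˢ I))
    (hq : ContDiffOn ℝ 2 q (Ω ×ˢ I))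
    (hb : ∀ j i : Fin 3, ContDiffOn ℝ 2 (fun p => b p j i) (Ω ×ˢ I))
    (hψ : ∀ i : Fin 3, ContDiffOn ℝ 1 (fun p => ψ p i) (Ω ×ˢ I))
    (ha : ∀ k i : Fin 3, ContDiffOn ℝ 1 (fun p => a p k i) (Ω ×ˢ I))
    (hPiola : ∀ p ∈ Ω ×ˢ I, ∀ i : Fin 3, (∑ j, pd j (fun y => b y j i) p) = 0)
    (hdiv : ∀ p ∈ Ω ×ˢ I, (∑ i, ∑ j, b p j i * pd j (fun y => v y i) p) = 0)
    (hmom : ∀ p ∈ Ω ×ˢ I, ∀ i : Fin 3,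
      pt (fun y => v y i) p
        + (∑ k, ∑ m, (v p m - ψ p m) * a p k m * pd k (fun y => v y i) p)
        + (∑ k, a p k i * pd k q p) = 0) :
    ∀ p ∈ Ω ×ˢ I,
      -(∑ j, pd j (fun y => ∑ i, ∑ k, b y j i * a y k i * pd k q y) p)
      = -(∑ i, ∑ j, pd j (fun y => pt (fun z => b z j i) y * v y i) p)
        + (∑ i, ∑ j, ∑ k, ∑ m,
            b p j i * pd j (fun y => (v y m - ψ y m) * a y k m) p * pd k (fun y => v y i) p)
        - ∑ i, ∑ j, ∑ k, ∑ m,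
            (v p m - ψ p m) * a p k m * pd k (fun y => b y j i) p * pd j (fun y => v y i) p := by
  intro p hp
  obtain ⟨t₀, t₁, rfl⟩ := hI
  have hU : IsOpen (Ω ×ˢ Set.Ioo t₀ t₁) := hΩ.prod isOpen_Ioo
  have hnb : Ω ×ˢ Set.Ioo t₀ t₁ ∈ nhds p := hU.mem_nhds hp
  have Hv : ∀ i, ContDiffAt ℝ 2 (fun y => v y i) p := fun i => (hv i).contDiffAt hnb
  have Hb : ∀ j i, ContDiffAt ℝ 2 (fun y => b y j i) p := fun j i => (hb j i).contDiffAt hnb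
  have dv' : ∀ i, DifferentiableAt ℝ (fun y => v y i) p :=
    fun i => (Hv i).differentiableAt (by norm_num)
  have db' : ∀ j i, DifferentiableAt ℝ (fun y => b y j i) p :=
    fun j i => (Hb j i).differentiableAt (by norm_num)
  have dψ' : ∀ i, DifferentiableAt ℝ (fun y => ψ y i) p :=
    fun i => ((hψ i).contDiffAt hnb).differentiableAt one_ne_zero
  have da' : ∀ k i, DifferentiableAt ℝ (fun y => a y k i) p :=
    fun k i => ((ha k i).contDiffAt hnb).differentiableAt one_ne_zero
  have dpdv : ∀ k i, DifferentiableAt ℝ (fun y => pd k (fun z => v z i) y) p :=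
    fun k i => pd_diff (Hv i) k
  have dptv : ∀ i, DifferentiableAt ℝ (fun y => pt (fun z => v z i) y) p :=
    fun i => pt_diff (Hv i)
  have dpdb : ∀ k j i, DifferentiableAt ℝ (fun y => pd k (fun z => b z j i) y) p :=
    fun k j i => pd_diff (Hb j i) k
  have dptb : ∀ j i, DifferentiableAt ℝ (fun y => pt (fun z => b z j i) y) p :=
    fun j i => pt_diff (Hb j i)
  have dc : ∀ k m, DifferentiableAt ℝ (fun y => (v y m - ψ y m) * a y k m) p :=
    fun k m => ((dv' m).sub (dψ' m)).mul (da' k m)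
  have dS : ∀ i, DifferentiableAt ℝ
      (fun y => ∑ k, ∑ m, (v y m - ψ y m) * a y k m * pd k (fun z => v z i) y) p := by
    intro i
    apply DifferentiableAt.fun_sum; intro k _
    apply DifferentiableAt.fun_sum; intro m _
    exact (dc k m).mul (dpdv k i)
  have dW : ∀ i, DifferentiableAt ℝ
      (fun y => pt (fun z => v z i) y
        + ∑ k, ∑ m, (v y m - ψ y m) * a y k m * pd k (fun z => v z i) y) p :=
    fun i => (dptv i).add (dS i)
  -- Z1 : time derivative of the Piola identity
  have Z1 : ∀ i, (∑ j, pd j (fun y => pt (fun z => b z j i) y) p) = 0 := by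
    intro i
    calc (∑ j, pd j (fun y => pt (fun z => b z j i) y) p)
        = ∑ j, pt (fun y => pd j (fun z => b z j i) y) p :=
          Finset.sum_congr rfl fun j _ => pd_pt_swap (Hb j i) j
      _ = pt (fun y => ∑ j, pd j (fun z => b z j i) y) p :=
          (pt_sum Finset.univ (fun j _ => dpdb j j i)).symm
      _ = pt (fun _ => (0 : ℝ)) p :=
          pt_congr (by filter_upwards [hnb] with y hy; exact hPiola y hy i)
      _ = 0 := pt_zero_fun p
  -- Z2 : time derivative of the divergence identity
  have Z2 : (∑ i, ∑ j, (pt (fun z => b z j i) p * pd j (fun z => v z i) p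
      + b p j i * pt (fun y => pd j (fun z => v z i) y) p)) = 0 := by
    have h0 : pt (fun y => ∑ i, ∑ j, b y j i * pd j (fun z => v z i) y) p
        = pt (fun _ => (0 : ℝ)) p :=
      pt_congr (by filter_upwards [hnb] with y hy; exact hdiv y hy)
    rw [pt_sum Finset.univ
        (fun i _ => DifferentiableAt.fun_sum (fun j _ => (db' j i).fun_mul (dpdv j i))),
      pt_zero_fun] at h0
    rw [← h0]
    refine Finset.sum_congr rfl fun i _ => ?_
    rw [pt_sum Finset.univ (fun j _ => (db' j i).fun_mul (dpdv j i))]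
    exact Finset.sum_congr rfl fun j _ => (pt_mul (db' j i) (dpdv j i)).symm
  -- Z3 : spatial derivatives of the divergence identity
  have Z3 : ∀ k, (∑ i, ∑ j, (pd k (fun z => b z j i) p * pd j (fun z => v z i) p
      + b p j i * pd k (fun y => pd j (fun z => v z i) y) p)) = 0 := by
    intro k
    have h0 : pd k (fun y => ∑ i, ∑ j, b y j i * pd j (fun z => v z i) y) p
        = pd k (fun _ => (0 : ℝ)) p :=
      pd_congr (by filter_upwards [hnb] with y hy; exact hdiv y hy) k
    rw [pd_sum Finset.univ
        (fun i _ => DifferentiableAt.fun_sum (fun j _ => (db' j i).fun_mul (dpdv j i))),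
      pd_zero_fun] at h0
    rw [← h0]
    refine Finset.sum_congr rfl fun i _ => ?_
    rw [pd_sum Finset.univ (fun j _ => (db' j i).fun_mul (dpdv j i))]
    exact Finset.sum_congr rfl fun j _ => (pd_mul (db' j i) (dpdv j i) k).symm
  -- R1 : simplification of the right-hand side first term
  have R1 : (∑ i, ∑ j, pd j (fun y => pt (fun z => b z j i) y * v y i) p)
      = ∑ i, ∑ j, pt (fun z => b z j i) p * pd j (fun z => v z i) p := by
    calc (∑ i, ∑ j, pd j (fun y => pt (fun z => b z j i) y * v y i) p)
        = ∑ i, ∑ j, (pd j (fun y => pt (fun z => b z j i) y) p * v p i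
            + pt (fun z => b z j i) p * pd j (fun z => v z i) p) :=
          Finset.sum_congr rfl fun i _ => Finset.sum_congr rfl fun j _ =>
            pd_mul (dptb j i) (dv' i) j
      _ = ∑ i, ∑ j, pt (fun z => b z j i) p * pd j (fun z => v z i) p :=
          aux_A _ _ _ Z1
  -- Lj : the momentum substitution and expansion, for each j
  have Lj : ∀ j, pd j (fun y => ∑ i, ∑ k, b y j i * a y k i * pd k q y) p
      = -(∑ i, (pd j (fun y => b y j i) p
            * (pt (fun z => v z i) p
              + ∑ k, ∑ m, (v p m - ψ p m) * a p k m * pd k (fun z => v z i) p)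
          + b p j i * (pd j (fun y => pt (fun z => v z i) y) p
            + ∑ k, ∑ m, (pd j (fun y => (v y m - ψ y m) * a y k m) p * pd k (fun z => v z i) p
                + (v p m - ψ p m) * a p k m * pd j (fun y => pd k (fun z => v z i) y) p)))) := by
    intro j
    have hcong : (fun y => ∑ i, ∑ k, b y j i * a y k i * pd k q y) =ᶠ[nhds p]
        (fun y => ∑ i, -(b y j i * (pt (fun z => v z i) y
          + ∑ k, ∑ m, (v y m - ψ y m) * a y k m * pd k (fun z => v z i) y))) := by
      filter_upwards [hnb] with y hy
      have h1 : ∀ i : Fin 3, (∑ k, a y k i * pd k q y)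
          = -(pt (fun z => v z i) y
            + ∑ k, ∑ m, (v y m - ψ y m) * a y k m * pd k (fun z => v z i) y) := by
        intro i
        have h2 := hmom y hy i
        linarith
      calc (∑ i, ∑ k, b y j i * a y k i * pd k q y)
          = ∑ i, b y j i * ∑ k, a y k i * pd k q y := by
            refine Finset.sum_congr rfl fun i _ => ?_
            rw [Finset.mul_sum]
            exact Finset.sum_congr rfl fun k _ => mul_assoc _ _ _
        _ = ∑ i, -(b y j i * (pt (fun z => v z i) y
              + ∑ k, ∑ m, (v y m - ψ y m) * a y k m * pd k (fun z => v z i) y)) := by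
            refine Finset.sum_congr rfl fun i _ => ?_
            rw [h1 i]; ring
    rw [pd_congr hcong j,
      pd_sum Finset.univ (fun i _ => ((db' j i).fun_mul (dW i)).fun_neg) j,
      ← Finset.sum_neg_distrib]
    refine Finset.sum_congr rfl fun i _ => ?_
    have hW : pd j (fun y => pt (fun z => v z i) y
        + ∑ k, ∑ m, (v y m - ψ y m) * a y k m * pd k (fun z => v z i) y) p
        = pd j (fun y => pt (fun z => v z i) y) p
          + ∑ k, ∑ m, (pd j (fun y => (v y m - ψ y m) * a y k m) p * pd k (fun z => v z i) p
              + (v p m - ψ p m) * a p k m * pd j (fun y => pd k (fun z => v z i) y) p) := by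
      rw [pd_add (dptv i) (dS i) j,
        pd_sum Finset.univ (fun k _ => DifferentiableAt.fun_sum
          (fun m _ => (dc k m).fun_mul (dpdv k i))) j]
      congr 1
      refine Finset.sum_congr rfl fun k _ => ?_
      rw [pd_sum Finset.univ (fun m _ => (dc k m).fun_mul (dpdv k i)) j]
      refine Finset.sum_congr rfl fun m _ => ?_
      exact pd_mul (dc k m) (dpdv k i) j
    rw [pd_neg, pd_mul (db' j i) (dW i) j, hW]
  -- assemble the left-hand side
  have hA1 : (∑ j, pd j (fun y => ∑ i, ∑ k, b y j i * a y k i * pd k q y) p)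
      = -((∑ j, ∑ i, pd j (fun y => b y j i) p
            * (pt (fun z => v z i) p
              + ∑ k, ∑ m, (v p m - ψ p m) * a p k m * pd k (fun z => v z i) p))
        + (∑ j, ∑ i, b p j i * pd j (fun y => pt (fun z => v z i) y) p)
        + (∑ j, ∑ i, ∑ k, ∑ m, b p j i
            * (pd j (fun y => (v y m - ψ y m) * a y k m) p * pd k (fun z => v z i) p))
        + (∑ j, ∑ i, ∑ k, ∑ m, b p j i
            * ((v p m - ψ p m) * a p k m * pd j (fun y => pd k (fun z => v z i) y) p))) := by
    rw [Finset.sum_congr rfl fun j _ => Lj j]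
    exact aux_expand _ _ _ _ _
  have hSA : (∑ j, ∑ i, pd j (fun y => b y j i) p
      * (pt (fun z => v z i) p
        + ∑ k, ∑ m, (v p m - ψ p m) * a p k m * pd k (fun z => v z i) p)) = 0 :=
    aux_A0 _ _ (hPiola p hp)
  have hSB : (∑ j, ∑ i, b p j i * pd j (fun y => pt (fun z => v z i) y) p)
      = -(∑ i, ∑ j, pt (fun z => b z j i) p * pd j (fun z => v z i) p) := by
    have e : (∑ j, ∑ i, b p j i * pd j (fun y => pt (fun z => v z i) y) p)
        = ∑ j, ∑ i, b p j i * pt (fun y => pd j (fun z => v z i) y) p :=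
      Finset.sum_congr rfl fun j _ => Finset.sum_congr rfl fun i _ => by
        rw [pd_pt_swap (Hv i) j]
    rw [e]
    exact aux_B _ _ Z2
  have hSC : (∑ j, ∑ i, ∑ k, ∑ m, b p j i
      * (pd j (fun y => (v y m - ψ y m) * a y k m) p * pd k (fun z => v z i) p))
      = ∑ i, ∑ j, ∑ k, ∑ m, b p j i
        * pd j (fun y => (v y m - ψ y m) * a y k m) p * pd k (fun z => v z i) p :=
    aux_C _ _ _
  have hSD1 : (∑ j, ∑ i, ∑ k, ∑ m, b p j i
      * ((v p m - ψ p m) * a p k m * pd j (fun y => pd k (fun z => v z i) y) p))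
      = ∑ j, ∑ i, ∑ k, ∑ m, b p j i
        * ((v p m - ψ p m) * a p k m * pd k (fun y => pd j (fun z => v z i) y) p) := by
    refine Finset.sum_congr rfl fun j _ => Finset.sum_congr rfl fun i _ =>
      Finset.sum_congr rfl fun k _ => Finset.sum_congr rfl fun m _ => ?_
    rw [pd_pd_swap (Hv i) j k]
  have hSD2 : (∑ j, ∑ i, ∑ k, ∑ m, b p j i
      * ((v p m - ψ p m) * a p k m * pd k (fun y => pd j (fun z => v z i) y) p))
      = -(∑ i, ∑ j, ∑ k, ∑ m, (v p m - ψ p m) * a p k m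
          * (pd k (fun z => b z j i) p * pd j (fun z => v z i) p)) :=
    aux_D _ _ _ _ Z3
  have hT3 : (∑ i, ∑ j, ∑ k, ∑ m, (v p m - ψ p m) * a p k m
      * (pd k (fun z => b z j i) p * pd j (fun z => v z i) p))
      = ∑ i, ∑ j, ∑ k, ∑ m, (v p m - ψ p m) * a p k m
        * pd k (fun z => b z j i) p * pd j (fun z => v z i) p := by
    refine Finset.sum_congr rfl fun i _ => Finset.sum_congr rfl fun j _ =>
      Finset.sum_congr rfl fun k _ => Finset.sum_congr rfl fun m _ => ?_
    ring
  linarith [hA1, hSA, hSB, hSC, hSD1, hSD2, hT3, R1]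

end
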